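/- Let (Ω, 𝔽, P) be a probability space, let ψ ∈ Ψ(∞), and let ζ be a random variable with 0 < ‖ζ‖_{Gψ} < ∞, where ‖ζ‖_{Gψ} = sup_{p ≥ 1} |ζ|_{L_p(P)}/ψ(p). Define v_ψ(p) = p·ln ψ(p) and its Legendre (Young–Fenchel) transform v_ψ*(x) = sup_{p ≥ 1} (p·x − v_ψ(p)). Then for all y ≥ e·‖ζ‖_{Gψ}, P(|ζ| > y) ≤ exp( −v_ψ*( ln( y/‖ζ‖_{Gψ} ) ) ). -/

import Mathlib

/-!
Chebyshev–Markov's inequality in `L_p` together with `|ζ|_p ≤ ‖ζ‖_{Gψ} ψ(p)` gives, for every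
`p ≥ 1`, `P(|ζ| > y) ≤ (‖ζ‖_{Gψ} ψ(p) / y)^p = exp(-(p ln(y / ‖ζ‖_{Gψ}) - p ln ψ(p)))`;
the infimum of the right-hand side over `p ≥ 1` is the stated bound.
-/

open MeasureTheory ENNReal

/-- The Grand Lebesgue Space norm `‖ζ‖_{Gψ} = sup_{p ≥ 1} |ζ|_{L_p(P)} / ψ(p)`
(for `ψ ∈ Ψ(∞)`). -/
noncomputable def glsNormInf {Ω : Type*} [MeasurableSpace Ω] (P : Measure Ω)
    (ψ : ℝ → ℝ) (ζ : Ω → ℝ) : ℝ≥0∞ :=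
  ⨆ (p : ℝ) (_ : 1 ≤ p), eLpNorm ζ (ENNReal.ofReal p) P / ENNReal.ofReal (ψ p)

/-- The Legendre (Young–Fenchel) transform `v_ψ*(x) = sup_{p ≥ 1} (p·x − v_ψ(p))` of
`v_ψ(p) = p·ln ψ(p)`, with values in the extended reals. -/
noncomputable def legendreVPsi (ψ : ℝ → ℝ) (x : ℝ) : EReal :=
  ⨆ (p : ℝ) (_ : 1 ≤ p), ((p * x - p * Real.log (ψ p) : ℝ) : EReal)

theorem meas_lt_abs_le_eLpNorm_div_rpow {α : Type*} [MeasurableSpace α] {μ : Measure α}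
    {f : α → ℝ} (hf : AEStronglyMeasurable f μ) {p y : ℝ} (hp : 0 < p) (hy : 0 < y) :
    μ {x | y < |f x|} ≤ (eLpNorm f (ENNReal.ofReal p) μ / ENNReal.ofReal y) ^ p := by
  have hsub : {x | y < |f x|} ⊆ {x | ENNReal.ofReal y ≤ ‖f x‖ₑ} := fun x hx ↦ by
    rw [Set.mem_ofPred_eq, Real.enorm_eq_ofReal_abs]
    exact ENNReal.ofReal_le_ofReal hx.le
  calc μ {x | y < |f x|} ≤ μ {x | ENNReal.ofReal y ≤ ‖f x‖ₑ} := measure_mono hsub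
    _ ≤ (ENNReal.ofReal y)⁻¹ ^ p * eLpNorm f (ENNReal.ofReal p) μ ^ p := by
      have h := meas_ge_le_mul_pow_eLpNorm_enorm μ (ENNReal.ofReal_pos.mpr hp).ne' ofReal_ne_top
        hf (ENNReal.ofReal_pos.mpr hy).ne' (by simp)
      rwa [ENNReal.toReal_ofReal hp.le] at h
    _ = _ := by
      rw [div_eq_mul_inv, ENNReal.mul_rpow_of_nonneg _ _ hp.le, mul_comm]

theorem eLpNorm_le_glsNormInf_mul {Ω : Type*} [MeasurableSpace Ω] {P : Measure Ω}
    {ψ : ℝ → ℝ} {ζ : Ω → ℝ} (hfin : glsNormInf P ψ ζ < ⊤) {p : ℝ} (hp : 1 ≤ p) :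
    eLpNorm ζ (ENNReal.ofReal p) P ≤ glsNormInf P ψ ζ * ENNReal.ofReal (ψ p) := by
  rw [← ENNReal.div_le_iff_le_mul (Or.inr hfin.ne) (Or.inl ofReal_ne_top)]
  exact le_iSup₂ (f := fun (p : ℝ) (_ : 1 ≤ p) ↦
    eLpNorm ζ (ENNReal.ofReal p) P / ENNReal.ofReal (ψ p)) p hp

theorem le_exp_neg_biSup {ι : Type*} {q : ι → Prop} {f : ι → EReal} {a : ℝ≥0∞}
    (h : ∀ i, q i → a ≤ EReal.exp (-f i)) : a ≤ EReal.exp (-⨆ (i) (_ : q i), f i) := by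
  have hlog : ∀ i, q i → f i ≤ -ENNReal.log a := fun i hi ↦
    EReal.le_neg_of_le_neg (by simpa using ENNReal.log_monotone (h i hi))
  calc a = EReal.exp (ENNReal.log a) := (ENNReal.exp_log a).symm
    _ ≤ _ := EReal.exp_monotone (EReal.le_neg_of_le_neg (iSup₂_le hlog))

theorem meas_lt_abs_le_exp_of_glsNormInf {Ω : Type*} [MeasurableSpace Ω] {P : Measure Ω}
    {ψ : ℝ → ℝ} {ζ : Ω → ℝ} (hζ : AEStronglyMeasurable ζ P)
    (hpos : 0 < glsNormInf P ψ ζ) (hfin : glsNormInf P ψ ζ < ⊤)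
    {y : ℝ} (hy : 0 < y) {p : ℝ} (hp : 1 ≤ p) :
    P {ω | y < |ζ ω|} ≤ EReal.exp (-((p * Real.log (y / (glsNormInf P ψ ζ).toReal)
      - p * Real.log (ψ p) : ℝ) : EReal)) := by
  set G := (glsNormInf P ψ ζ).toReal
  have hG : 0 < G := ENNReal.toReal_pos hpos.ne' hfin.ne
  have hp0 : 0 < p := zero_lt_one.trans_le hp
  have hmarkov : P {ω | y < |ζ ω|} ≤ ENNReal.ofReal (G * ψ p / y) ^ p := by
    refine (meas_lt_abs_le_eLpNorm_div_rpow hζ hp0 hy).trans (ENNReal.rpow_le_rpow ?_ hp0.le)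
    rw [ENNReal.ofReal_div_of_pos hy, ENNReal.ofReal_mul hG.le, ENNReal.ofReal_toReal hfin.ne]
    exact ENNReal.div_le_div_right (eLpNorm_le_glsNormInf_mul hfin hp) _
  rcases le_or_gt (ψ p) 0 with hψ | hψ
  · have hzero : ENNReal.ofReal (G * ψ p / y) = 0 :=
      ENNReal.ofReal_of_nonpos (div_nonpos_of_nonpos_of_nonneg
        (mul_nonpos_of_nonneg_of_nonpos hG.le hψ) hy.le)
    rw [hzero, ENNReal.zero_rpow_of_pos hp0] at hmarkov
    exact hmarkov.trans bot_le
  · have hbase : 0 < G * ψ p / y := by positivity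
    rw [ENNReal.ofReal_rpow_of_pos hbase, Real.rpow_def_of_pos hbase,
      Real.log_div (by positivity) hy.ne', Real.log_mul hG.ne' hψ.ne'] at hmarkov
    rw [← EReal.coe_neg, EReal.exp_coe, Real.log_div hy.ne' hG.ne']
    convert hmarkov using 3
    ring

theorem gls_tail_estimate_general
    {Ω : Type*} [MeasurableSpace Ω] (P : Measure Ω)
    (ψ : ℝ → ℝ)
    (ζ : Ω → ℝ) (hζm : Measurable ζ)
    (hpos : 0 < glsNormInf P ψ ζ) (hfin : glsNormInf P ψ ζ < ⊤) :
    ∀ y : ℝ, Real.exp 1 * (glsNormInf P ψ ζ).toReal ≤ y →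
      P {ω | y < |ζ ω|} ≤
        EReal.exp (-(legendreVPsi ψ (Real.log (y / (glsNormInf P ψ ζ).toReal)))) := by
  intro y hy
  have hG : 0 < (glsNormInf P ψ ζ).toReal := ENNReal.toReal_pos hpos.ne' hfin.ne
  have hy0 : 0 < y := lt_of_lt_of_le (by positivity) hy
  exact le_exp_neg_biSup fun p hp ↦
    meas_lt_abs_le_exp_of_glsNormInf hζm.aestronglyMeasurable hpos hfin hy0 hp

/-- **Tail estimate (2.2).**  Let `(Ω, 𝔽, P)` be a probability space, `ψ ∈ Ψ(∞)`, and
`ζ` a random variable with `0 < ‖ζ‖_{Gψ} < ∞`.  With `v_ψ(p) = p·ln ψ(p)` and its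
Legendre transform `v_ψ*(x) = sup_{p ≥ 1}(p·x − v_ψ(p))`, one has, for all
`y ≥ e·‖ζ‖_{Gψ}`, the bound `P(|ζ| > y) ≤ exp(−v_ψ*(ln(y/‖ζ‖_{Gψ})))`. -/
theorem gls_tail_estimate
    {Ω : Type*} [MeasurableSpace Ω] (P : Measure Ω) [IsProbabilityMeasure P]
    (ψ : ℝ → ℝ) (hψcont : ContinuousOn ψ (Set.Ici (1 : ℝ)))
    (hψpos : ∃ c : ℝ, 0 < c ∧ ∀ p : ℝ, 1 ≤ p → c ≤ ψ p)
    (ζ : Ω → ℝ) (hζm : Measurable ζ)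
    (hpos : 0 < glsNormInf P ψ ζ) (hfin : glsNormInf P ψ ζ < ⊤) :
    ∀ y : ℝ, Real.exp 1 * (glsNormInf P ψ ζ).toReal ≤ y →
      P {ω | y < |ζ ω|} ≤
        EReal.exp (-(legendreVPsi ψ (Real.log (y / (glsNormInf P ψ ζ).toReal)))) :=
  gls_tail_estimate_general P ψ ζ hζm hpos hfin
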